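/- Let 0 < m ≤ L be reals, let A be a real symmetric d×d matrix with m·I_d ⪯ A ⪯ L·I_d, and set κ := L/m. Let G be symmetric with G ⪰ A, let τ ∈ [0,1], and let ν be an admissible direction distribution on ℝ^d. Then ∫ σ_A(Broyd_τ(G, A, u)) dν(u) ≤ (1 − 1/(d·κ)) · σ_A(G). -/

import Mathlib

open Matrix MeasureTheory

/-- `σ_A(G) = tr((G - A) A⁻¹)`. -/
noncomputable def sigmaA {d : ℕ} (A G : Matrix (Fin d) (Fin d) ℝ) : ℝ :=
  ((G - A) * A⁻¹).trace

/-- The Broyden family quasi-Newton update `Broyd_τ(G, A, u)`. -/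
noncomputable def Broyd {d : ℕ} (τ : ℝ) (G A : Matrix (Fin d) (Fin d) ℝ) (u : Fin d → ℝ) :
    Matrix (Fin d) (Fin d) ℝ :=
  if G *ᵥ u = A *ᵥ u then G
  else
    τ • (G - (u ⬝ᵥ (A *ᵥ u))⁻¹ •
            (vecMulVec (A *ᵥ u) (u ᵥ* G) + vecMulVec (G *ᵥ u) (u ᵥ* A))
          + ((u ⬝ᵥ (G *ᵥ u)) / (u ⬝ᵥ (A *ᵥ u)) + 1) •
            ((u ⬝ᵥ (A *ᵥ u))⁻¹ • vecMulVec (A *ᵥ u) (u ᵥ* A)))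
      + (1 - τ) • (G - (u ⬝ᵥ ((G - A) *ᵥ u))⁻¹ •
            vecMulVec ((G - A) *ᵥ u) (u ᵥ* (G - A)))

/-- An admissible direction distribution: a probability measure on `ℝ^d` giving no mass to `0`
and with `∫ u uᵀ/(uᵀu) dν = (1/d) I` (entrywise). -/
def IsAdmissible {d : ℕ} (ν : Measure (Fin d → ℝ)) : Prop :=
  IsProbabilityMeasure ν ∧ ν {0} = 0 ∧
    ∀ i j : Fin d, (∫ u, u i * u j / (u ⬝ᵥ u) ∂ν) = if i = j then (d : ℝ)⁻¹ else 0

/-!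
For a direction `u` with `G u ≠ A u` the Broyden update is `τ • DFP + (1 - τ) • SR1`, and `σ_A`
is affine, with `σ_A(DFP) = σ_A(G) - r / uᵀAu` and `σ_A(SR1) = σ_A(G) - vᵀA⁻¹v / r`, where
`v = (G - A) u` and `r = uᵀv`. Both decrements are at least `r / (L uᵀu)`: the first since
`A ⪯ L I`, the second by Cauchy–Schwarz `r² ≤ |u|² |v|²` and `A⁻¹ ⪰ L⁻¹ I`. Averaging
`r / uᵀu` over an admissible `ν` gives `tr(G - A) / d`, and `tr(G - A) ≥ m σ_A(G)` since
`A⁻¹ ⪯ m⁻¹ I`.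
-/

namespace Matrix

variable {n : Type*}

theorem posDef_of_posSemidef_sub_smul_one [DecidableEq n] {A : Matrix n n ℝ} {c : ℝ} (hc : 0 < c)
    (h : (A - c • 1).PosSemidef) : A.PosDef := by
  simpa using PosDef.posSemidef_add h (PosDef.one.smul hc)

variable [Fintype n]

theorem PosSemidef.sq_dotProduct_mulVec_le {P : Matrix n n ℝ} (hP : P.PosSemidef)
    (x y : n → ℝ) : (x ⬝ᵥ P *ᵥ y) ^ 2 ≤ (x ⬝ᵥ P *ᵥ x) * (y ⬝ᵥ P *ᵥ y) := by
  classical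
  have hsymm : LinearMap.IsSymm (toBilin' P) := LinearMap.BilinForm.isSymm_iff.mp <|
    isSymm_toBilin'_iff_isSymm.mpr (isHermitian_iff_isSymm.mp hP.isHermitian)
  simpa only [toBilin'_apply'] using (toBilin' P).apply_sq_le_of_symm
    (fun z => by simpa [toBilin'_apply'] using hP.dotProduct_mulVec_nonneg z) hsymm x y

theorem PosSemidef.trace_mul_nonneg [DecidableEq n] {P Q : Matrix n n ℝ} (hP : P.PosSemidef)
    (hQ : Q.PosSemidef) : 0 ≤ (P * Q).trace := by
  open scoped MatrixOrder in
  obtain ⟨B, rfl⟩ := CStarAlgebra.nonneg_iff_eq_star_mul_self.mp hP.nonneg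
  rw [star_eq_conjTranspose, Matrix.mul_assoc, trace_mul_comm]
  exact (hQ.mul_mul_conjTranspose_same B).trace_nonneg

theorem trace_vecMulVec_mul (x y : n → ℝ) (M : Matrix n n ℝ) :
    (vecMulVec x y * M).trace = y ⬝ᵥ M *ᵥ x := by
  rw [vecMulVec_mul, trace_vecMulVec, dotProduct_comm, dotProduct_mulVec]

variable [DecidableEq n]

theorem dotProduct_mulVec_le_of_posSemidef {A : Matrix n n ℝ} {c : ℝ}
    (h : (c • 1 - A).PosSemidef) (x : n → ℝ) : x ⬝ᵥ A *ᵥ x ≤ c * (x ⬝ᵥ x) := by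
  simpa only [star_trivial, sub_mulVec, smul_mulVec, one_mulVec, dotProduct_sub, dotProduct_smul,
    smul_eq_mul, sub_nonneg] using h.dotProduct_mulVec_nonneg x

theorem le_dotProduct_mulVec_of_posSemidef {A : Matrix n n ℝ} {c : ℝ}
    (h : (A - c • 1).PosSemidef) (x : n → ℝ) : c * (x ⬝ᵥ x) ≤ x ⬝ᵥ A *ᵥ x := by
  simpa only [star_trivial, sub_mulVec, smul_mulVec, one_mulVec, dotProduct_sub, dotProduct_smul,
    smul_eq_mul, sub_nonneg] using h.dotProduct_mulVec_nonneg x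

theorem dotProduct_self_le_mul_dotProduct_inv_mulVec {A : Matrix n n ℝ} {c : ℝ}
    (hA : A.PosDef) (hAc : (c • 1 - A).PosSemidef) (v : n → ℝ) :
    v ⬝ᵥ v ≤ c * (v ⬝ᵥ A⁻¹ *ᵥ v) := by
  obtain rfl | hv := eq_or_ne v 0
  · simp
  set w := A⁻¹ *ᵥ v
  have hw : A *ᵥ w = v := by
    rw [mulVec_mulVec, mul_nonsing_inv A ((isUnit_iff_isUnit_det A).mp hA.isUnit), one_mulVec]
  -- Cauchy–Schwarz for the form of `A` at `v = A w` and `w`: `(v ⬝ v)² ≤ (vᵀAv) (vᵀA⁻¹v)`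
  have hcs := hA.posSemidef.sq_dotProduct_mulVec_le v w
  rw [hw, dotProduct_comm w v] at hcs
  have hAv := dotProduct_mulVec_le_of_posSemidef hAc v
  have hs : 0 ≤ v ⬝ᵥ w := by simpa [w] using hA.inv.posSemidef.dotProduct_mulVec_nonneg v
  have hvv : 0 < v ⬝ᵥ v := by simpa using dotProduct_star_self_pos_iff.mpr hv
  nlinarith [mul_le_mul_of_nonneg_right hAv hs]

theorem posSemidef_one_sub_smul_inv {A : Matrix n n ℝ} {c : ℝ}
    (hA : A.PosDef) (hAc : (A - c • 1).PosSemidef) : (1 - c • A⁻¹).PosSemidef := by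
  have hdet : IsUnit A.det := (isUnit_iff_isUnit_det A).mp hA.isUnit
  refine .of_dotProduct_mulVec_nonneg (isHermitian_one.sub (hA.inv.isHermitian.smul (.all c)))
    fun w => ?_
  obtain ⟨z, rfl⟩ : ∃ z, A *ᵥ z = w :=
    ⟨A⁻¹ *ᵥ w, by rw [mulVec_mulVec, mul_nonsing_inv A hdet, one_mulVec]⟩
  simp only [star_trivial, sub_mulVec, smul_mulVec, one_mulVec, dotProduct_sub, dotProduct_smul,
    smul_eq_mul, sub_nonneg]
  rw [mulVec_mulVec, nonsing_inv_mul A hdet, one_mulVec, dotProduct_comm (A *ᵥ z) z]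
  obtain rfl | hz := eq_or_ne z 0
  · simp
  -- the goal `c (zᵀAz) ≤ |Az|²` follows from `c |z|² ≤ zᵀAz` and `(zᵀAz)² ≤ |z|² |Az|²`
  have hcs := PosSemidef.one.sq_dotProduct_mulVec_le z (A *ᵥ z)
  simp only [one_mulVec] at hcs
  have hAz := le_dotProduct_mulVec_of_posSemidef hAc z
  have hq : 0 < z ⬝ᵥ A *ᵥ z := by simpa using hA.dotProduct_mulVec_pos hz
  have hww : 0 ≤ A *ᵥ z ⬝ᵥ A *ᵥ z := by simpa using dotProduct_star_self_nonneg (A *ᵥ z)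
  rcases le_or_gt c 0 with hc | hc
  · nlinarith
  · nlinarith [mul_le_mul_of_nonneg_right hAz hww, mul_le_mul_of_nonneg_left hcs hc.le]

theorem dotProduct_mulVec_div_le_dotProduct_inv_mulVec_div {A M : Matrix n n ℝ} {L : ℝ}
    (hA : A.PosDef) (hAL : (L • 1 - A).PosSemidef) (hM : M.PosSemidef) (u : n → ℝ) :
    u ⬝ᵥ M *ᵥ u / (L * (u ⬝ᵥ u)) ≤ M *ᵥ u ⬝ᵥ A⁻¹ *ᵥ (M *ᵥ u) / (u ⬝ᵥ M *ᵥ u) := by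
  obtain rfl | hu := eq_or_ne u 0
  · simp
  set v := M *ᵥ u
  have hr : 0 ≤ u ⬝ᵥ v := by simpa using hM.dotProduct_mulVec_nonneg u
  rcases hr.eq_or_lt with h | h
  · simp [← h]
  have hLu : 0 < L * (u ⬝ᵥ u) := by
    simpa using (hA.dotProduct_mulVec_pos hu).trans_le (dotProduct_mulVec_le_of_posSemidef hAL u)
  have hcs : (u ⬝ᵥ v) ^ 2 ≤ (u ⬝ᵥ u) * (v ⬝ᵥ v) := by
    simpa using PosSemidef.one.sq_dotProduct_mulVec_le u v
  have hvs := dotProduct_self_le_mul_dotProduct_inv_mulVec hA hAL v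
  have huu : 0 ≤ u ⬝ᵥ u := by simpa using dotProduct_star_self_nonneg u
  rw [div_le_div_iff₀ hLu h]
  nlinarith [mul_le_mul_of_nonneg_left hvs huu]

end Matrix

section Broyden

variable {d : ℕ}

noncomputable def dfpUpdate (G A : Matrix (Fin d) (Fin d) ℝ) (u : Fin d → ℝ) :
    Matrix (Fin d) (Fin d) ℝ :=
  G - (u ⬝ᵥ (A *ᵥ u))⁻¹ • (vecMulVec (A *ᵥ u) (u ᵥ* G) + vecMulVec (G *ᵥ u) (u ᵥ* A))
    + ((u ⬝ᵥ (G *ᵥ u)) / (u ⬝ᵥ (A *ᵥ u)) + 1) •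
      ((u ⬝ᵥ (A *ᵥ u))⁻¹ • vecMulVec (A *ᵥ u) (u ᵥ* A))

noncomputable def sr1Update (G A : Matrix (Fin d) (Fin d) ℝ) (u : Fin d → ℝ) :
    Matrix (Fin d) (Fin d) ℝ :=
  G - (u ⬝ᵥ ((G - A) *ᵥ u))⁻¹ • vecMulVec ((G - A) *ᵥ u) (u ᵥ* (G - A))

theorem broyd_eq_of_mulVec_ne {τ : ℝ} {G A : Matrix (Fin d) (Fin d) ℝ} {u : Fin d → ℝ}
    (h : G *ᵥ u ≠ A *ᵥ u) :
    Broyd τ G A u = τ • dfpUpdate G A u + (1 - τ) • sr1Update G A u :=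
  if_neg h

variable {A G : Matrix (Fin d) (Fin d) ℝ}

theorem sigmaA_nonneg (hA : A.PosSemidef) (hGA : (G - A).PosSemidef) : 0 ≤ sigmaA A G :=
  hGA.trace_mul_nonneg hA.inv

theorem mul_sigmaA_le_trace {m : ℝ} (hA : A.PosDef) (hAm : (A - m • 1).PosSemidef)
    (hGA : (G - A).PosSemidef) : m * sigmaA A G ≤ (G - A).trace := by
  have := hGA.trace_mul_nonneg (posSemidef_one_sub_smul_inv hA hAm)
  rwa [Matrix.mul_sub, Matrix.mul_one, Matrix.mul_smul, trace_sub, trace_smul, smul_eq_mul,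
    sub_nonneg] at this

theorem sigmaA_smul_add_smul (τ : ℝ) (X Y : Matrix (Fin d) (Fin d) ℝ) :
    sigmaA A (τ • X + (1 - τ) • Y) = τ * sigmaA A X + (1 - τ) * sigmaA A Y := by
  have : τ • X + (1 - τ) • Y - A = τ • (X - A) + (1 - τ) • (Y - A) := by module
  simp only [sigmaA, this, Matrix.add_mul, Matrix.smul_mul, trace_add, trace_smul, smul_eq_mul]

theorem sigmaA_dfpUpdate (hA : IsUnit A.det) {u : Fin d → ℝ} (hu : u ⬝ᵥ A *ᵥ u ≠ 0) :
    sigmaA A (dfpUpdate G A u) = sigmaA A G - u ⬝ᵥ (G - A) *ᵥ u / u ⬝ᵥ A *ᵥ u := by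
  have hAG : (vecMulVec (A *ᵥ u) (u ᵥ* G) * A⁻¹).trace = u ⬝ᵥ G *ᵥ u := by
    rw [trace_vecMulVec_mul, mulVec_mulVec, nonsing_inv_mul A hA, one_mulVec, dotProduct_mulVec]
  have hGA : (vecMulVec (G *ᵥ u) (u ᵥ* A) * A⁻¹).trace = u ⬝ᵥ G *ᵥ u := by
    rw [trace_vecMulVec_mul, ← dotProduct_mulVec, mulVec_mulVec, mul_nonsing_inv A hA, one_mulVec]
  have hAA : (vecMulVec (A *ᵥ u) (u ᵥ* A) * A⁻¹).trace = u ⬝ᵥ A *ᵥ u := by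
    rw [trace_vecMulVec_mul, mulVec_mulVec, nonsing_inv_mul A hA, one_mulVec, dotProduct_mulVec]
  have : dfpUpdate G A u - A = (G - A) - (u ⬝ᵥ (A *ᵥ u))⁻¹ •
      (vecMulVec (A *ᵥ u) (u ᵥ* G) + vecMulVec (G *ᵥ u) (u ᵥ* A))
      + ((u ⬝ᵥ (G *ᵥ u)) / (u ⬝ᵥ (A *ᵥ u)) + 1) •
        ((u ⬝ᵥ (A *ᵥ u))⁻¹ • vecMulVec (A *ᵥ u) (u ᵥ* A)) := by
    rw [dfpUpdate]; abel
  simp only [sigmaA, this, Matrix.add_mul, Matrix.sub_mul, Matrix.smul_mul, trace_add, trace_sub,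
    trace_smul, smul_eq_mul, hAG, hGA, hAA, sub_mulVec, dotProduct_sub]
  field_simp
  ring

theorem sigmaA_sr1Update (hGA : (G - A).IsSymm) (u : Fin d → ℝ) :
    sigmaA A (sr1Update G A u) = sigmaA A G -
      (G - A) *ᵥ u ⬝ᵥ A⁻¹ *ᵥ ((G - A) *ᵥ u) / u ⬝ᵥ (G - A) *ᵥ u := by
  have hv : u ᵥ* (G - A) = (G - A) *ᵥ u := by rw [← mulVec_transpose, hGA.eq]
  have : sr1Update G A u - A = (G - A) - (u ⬝ᵥ ((G - A) *ᵥ u))⁻¹ •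
      vecMulVec ((G - A) *ᵥ u) ((G - A) *ᵥ u) := by
    rw [sr1Update, hv]; abel
  simp only [sigmaA, this, Matrix.sub_mul, Matrix.smul_mul, trace_sub, trace_smul, smul_eq_mul,
    trace_vecMulVec_mul]
  ring

theorem sigmaA_broyd_le {L τ : ℝ} (hA : A.PosDef)
    (hAL : (L • 1 - A).PosSemidef) (hGA : (G - A).PosSemidef) (hτ : τ ∈ Set.Icc (0 : ℝ) 1)
    {u : Fin d → ℝ} (hu : u ≠ 0) :
    sigmaA A (Broyd τ G A u) ≤ sigmaA A G - u ⬝ᵥ (G - A) *ᵥ u / (L * (u ⬝ᵥ u)) := by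
  by_cases hGu : G *ᵥ u = A *ᵥ u
  · simp [Broyd, hGu, sub_mulVec]
  have ha : 0 < u ⬝ᵥ A *ᵥ u := by simpa using hA.dotProduct_mulVec_pos hu
  have hr : 0 ≤ u ⬝ᵥ (G - A) *ᵥ u := by simpa using hGA.dotProduct_mulVec_nonneg u
  have hdfp : u ⬝ᵥ (G - A) *ᵥ u / (L * (u ⬝ᵥ u)) ≤ u ⬝ᵥ (G - A) *ᵥ u / u ⬝ᵥ A *ᵥ u :=
    div_le_div_of_nonneg_left hr ha (dotProduct_mulVec_le_of_posSemidef hAL u)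
  have hsr1 := dotProduct_mulVec_div_le_dotProduct_inv_mulVec_div hA hAL hGA u
  rw [broyd_eq_of_mulVec_ne hGu, sigmaA_smul_add_smul,
    sigmaA_dfpUpdate ((isUnit_iff_isUnit_det A).mp hA.isUnit) ha.ne',
    sigmaA_sr1Update (isHermitian_iff_isSymm.mp hGA.isHermitian)]
  nlinarith [mul_le_mul_of_nonneg_left hdfp hτ.1,
    mul_le_mul_of_nonneg_left hsr1 (sub_nonneg.mpr hτ.2)]

end Broyden

section Admissible

variable {n : Type*} [Fintype n]

theorem dotProduct_mulVec_div_eq_sum (M : Matrix n n ℝ) (u : n → ℝ) :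
    u ⬝ᵥ M *ᵥ u / (u ⬝ᵥ u) = ∑ i, ∑ j, M i j * (u i * u j / (u ⬝ᵥ u)) := by
  simp only [dotProduct, mulVec, Finset.sum_div, Finset.mul_sum]
  refine Finset.sum_congr rfl fun i _ => Finset.sum_congr rfl fun j _ => ?_
  ring

theorem integrable_mul_div_dotProduct_self (ν : Measure (n → ℝ)) [IsFiniteMeasure ν] (i j : n) :
    Integrable (fun u : n → ℝ => u i * u j / (u ⬝ᵥ u)) ν := by
  refine .mono' (integrable_const 1) (Measurable.aestronglyMeasurable (by fun_prop))
    (.of_forall fun u => ?_)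
  have hi : u i * u i ≤ u ⬝ᵥ u :=
    Finset.single_le_sum (f := fun k => u k * u k) (fun k _ => mul_self_nonneg (u k))
      (Finset.mem_univ i)
  have hj : u j * u j ≤ u ⬝ᵥ u :=
    Finset.single_le_sum (f := fun k => u k * u k) (fun k _ => mul_self_nonneg (u k))
      (Finset.mem_univ j)
  have huu : 0 ≤ u ⬝ᵥ u := (mul_self_nonneg _).trans hi
  rw [Real.norm_eq_abs, abs_div, abs_mul, abs_of_nonneg huu]
  refine div_le_one_of_le₀ ?_ huu
  nlinarith [abs_nonneg (u i), abs_nonneg (u j), abs_mul_abs_self (u i), abs_mul_abs_self (u j)]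

theorem integrable_dotProduct_mulVec_div (ν : Measure (n → ℝ)) [IsFiniteMeasure ν]
    (M : Matrix n n ℝ) : Integrable (fun u => u ⬝ᵥ M *ᵥ u / (u ⬝ᵥ u)) ν := by
  simp_rw [dotProduct_mulVec_div_eq_sum]
  exact integrable_finsetSum _ fun i _ => integrable_finsetSum _ fun j _ =>
    (integrable_mul_div_dotProduct_self ν i j).const_mul _

end Admissible

namespace IsAdmissible

variable {d : ℕ} {ν : Measure (Fin d → ℝ)}

theorem isProbabilityMeasure (hν : IsAdmissible ν) : IsProbabilityMeasure ν := hν.1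

theorem ae_ne_zero (hν : IsAdmissible ν) : ∀ᵐ u ∂ν, u ≠ 0 :=
  measure_eq_zero_iff_ae_notMem.mp hν.2.1

theorem dim_pos (hν : IsAdmissible ν) : 0 < d := by
  have := hν.isProbabilityMeasure
  obtain ⟨u, hu⟩ := hν.ae_ne_zero.exists
  exact Nat.pos_of_ne_zero fun hd => hu (by subst hd; exact Subsingleton.elim u 0)

theorem integral_dotProduct_mulVec_div (hν : IsAdmissible ν) (M : Matrix (Fin d) (Fin d) ℝ) :
    ∫ u, u ⬝ᵥ M *ᵥ u / (u ⬝ᵥ u) ∂ν = M.trace / d := by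
  have := hν.isProbabilityMeasure
  simp_rw [dotProduct_mulVec_div_eq_sum]
  have hint (i j : Fin d) := (integrable_mul_div_dotProduct_self ν i j).const_mul (M i j)
  rw [integral_finsetSum _ fun i _ => integrable_finsetSum _ fun j _ => hint i j]
  simp_rw [integral_finsetSum _ fun j _ => hint _ j, integral_const_mul, hν.2.2]
  simp [trace, div_eq_mul_inv, Finset.sum_mul]

theorem integral_le_sub_trace_div (hν : IsAdmissible ν) {f : (Fin d → ℝ) → ℝ}
    (hf : Integrable f ν) (c L : ℝ) (M : Matrix (Fin d) (Fin d) ℝ)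
    (hfle : ∀ u, u ≠ 0 → f u ≤ c - u ⬝ᵥ M *ᵥ u / (L * (u ⬝ᵥ u))) :
    ∫ u, f u ∂ν ≤ c - M.trace / (d * L) := by
  have := hν.isProbabilityMeasure
  have hg := (integrable_dotProduct_mulVec_div ν M).div_const L
  calc ∫ u, f u ∂ν ≤ ∫ u, c - u ⬝ᵥ M *ᵥ u / (u ⬝ᵥ u) / L ∂ν :=
        integral_mono_ae hf ((integrable_const c).sub hg) <| hν.ae_ne_zero.mono fun u hu => by
          simpa only [div_div, mul_comm L] using hfle u hu
    _ = c - M.trace / (d * L) := by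
        rw [integral_sub (integrable_const c) hg, integral_div, hν.integral_dotProduct_mulVec_div,
          div_div]
        simp

end IsAdmissible

theorem sigma_broyden_expected_decrease_general
    {d : ℕ} {m L : ℝ} (hm : 0 < m) (hmL : m ≤ L)
    {A : Matrix (Fin d) (Fin d) ℝ}
    (hAlow : (A - m • (1 : Matrix (Fin d) (Fin d) ℝ)).PosSemidef)
    (hAup : (L • (1 : Matrix (Fin d) (Fin d) ℝ) - A).PosSemidef)
    {G : Matrix (Fin d) (Fin d) ℝ} (hGA : (G - A).PosSemidef)
    {τ : ℝ} (hτ : τ ∈ Set.Icc (0 : ℝ) 1)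
    (ν : Measure (Fin d → ℝ)) (hν : IsAdmissible ν) :
    (∫ u, sigmaA A (Broyd τ G A u) ∂ν) ≤ (1 - 1 / (d * (L / m))) * sigmaA A G := by
  have hA : A.PosDef := posDef_of_posSemidef_sub_smul_one hm hAlow
  have hσ : 0 ≤ sigmaA A G := sigmaA_nonneg hA.posSemidef hGA
  by_cases hint : Integrable (fun u => sigmaA A (Broyd τ G A u)) ν
  swap
  · -- the Bochner integral of a non-integrable function is `0`
    have hd : (1 : ℝ) ≤ d := Nat.one_le_cast.mpr hν.dim_pos
    have hκ : 1 ≤ d * (L / m) := one_le_mul_of_one_le_of_one_le hd ((one_le_div hm).mpr hmL)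
    rw [integral_undef hint]
    exact mul_nonneg (sub_nonneg.mpr (div_le_one_of_le₀ hκ (by positivity))) hσ
  have hL : 0 < L := hm.trans_le hmL
  calc (∫ u, sigmaA A (Broyd τ G A u) ∂ν)
      ≤ sigmaA A G - (G - A).trace / (d * L) :=
        hν.integral_le_sub_trace_div hint _ _ _ fun u hu => sigmaA_broyd_le hA hAup hGA hτ hu
    _ ≤ sigmaA A G - m * sigmaA A G / (d * L) := by
        gcongr
        exact mul_sigmaA_le_trace hA hAlow hGA
    _ = (1 - 1 / (d * (L / m))) * sigmaA A G := by
        field_simp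

/-- Expected one-step decrease of `σ_A` under a random Broyden family update:
`∫ σ_A(Broyd_τ(G,A,u)) dν(u) ≤ (1 − 1/(dκ)) σ_A(G)` with `κ = L/m`. -/
theorem sigma_broyden_expected_decrease
    {d : ℕ} {m L : ℝ} (hm : 0 < m) (hmL : m ≤ L)
    {A : Matrix (Fin d) (Fin d) ℝ} (hAsymm : A.IsSymm)
    (hAlow : (A - m • (1 : Matrix (Fin d) (Fin d) ℝ)).PosSemidef)
    (hAup : (L • (1 : Matrix (Fin d) (Fin d) ℝ) - A).PosSemidef)
    {G : Matrix (Fin d) (Fin d) ℝ} (hGsymm : G.IsSymm) (hGA : (G - A).PosSemidef)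
    {τ : ℝ} (hτ : τ ∈ Set.Icc (0 : ℝ) 1)
    (ν : Measure (Fin d → ℝ)) (hν : IsAdmissible ν) :
    (∫ u, sigmaA A (Broyd τ G A u) ∂ν) ≤ (1 - 1 / (d * (L / m))) * sigmaA A G :=
  sigma_broyden_expected_decrease_general hm hmL hAlow hAup hGA hτ ν hν
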